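/- For τ in the upper half-plane and z ∈ ℂ, the Mumford theta functions satisfy [θ_{1/2,1} − θ_{−1/2,1}](2τ, 2z) = −i ϑ₁₁(τ, z), where θ_{k,m} is the Jacobi theta function. -/
import Mathlib

open Real Complex Filter Topology

noncomputable section

noncomputable def jacobiThetaKM (k m : ℝ) (τ z : ℂ) : ℂ :=
  ∑' j : ℤ,
    Complex.exp (2*(π:ℂ)*Complex.I*(m:ℂ)*((j:ℂ) + (k:ℂ)/(2*(m:ℂ)))*z) *
      Complex.exp (2*(π:ℂ)*Complex.I*τ*(m:ℂ)*((j:ℂ) + (k:ℂ)/(2*(m:ℂ)))^2)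

noncomputable def theta00 (τ z : ℂ) : ℂ :=
  ∑' n : ℤ, Complex.exp (2*(π:ℂ)*Complex.I*(n:ℂ)*z) *
    Complex.exp (2*(π:ℂ)*Complex.I*τ*((n:ℂ)^2/2))

noncomputable def theta01 (τ z : ℂ) : ℂ :=
  ∑' n : ℤ, (-1:ℂ)^n * Complex.exp (2*(π:ℂ)*Complex.I*(n:ℂ)*z) *
    Complex.exp (2*(π:ℂ)*Complex.I*τ*((n:ℂ)^2/2))

noncomputable def theta10 (τ z : ℂ) : ℂ :=
  ∑' n : ℤ, Complex.exp (2*(π:ℂ)*Complex.I*((n:ℂ)+1/2)*z) *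
    Complex.exp (2*(π:ℂ)*Complex.I*τ*((1/2)*((n:ℂ)+1/2)^2))

noncomputable def theta11 (τ z : ℂ) : ℂ :=
  Complex.I * ∑' n : ℤ, (-1:ℂ)^n * Complex.exp (2*(π:ℂ)*Complex.I*((n:ℂ)+1/2)*z) *
    Complex.exp (2*(π:ℂ)*Complex.I*τ*((1/2)*((n:ℂ)+1/2)^2))

lemma hasSum_int_even_add_odd' {f : ℤ → ℂ} {a b : ℂ}
    (he : HasSum (fun k : ℤ ↦ f (2*k)) a) (ho : HasSum (fun k : ℤ ↦ f (2*k-1)) b) :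
    HasSum f (a + b) := by
  have h2 : Function.Injective (fun k : ℤ ↦ 2*k) := fun x y h ↦ by dsimp only at h; omega
  have h3 : Function.Injective (fun k : ℤ ↦ 2*k-1) := fun x y h ↦ by dsimp only at h; omega
  refine HasSum.add_isCompl ?_ (h2.hasSum_range_iff.2 he) (h3.hasSum_range_iff.2 ho)
  have e1 : Set.range (fun k : ℤ ↦ 2*k) = {n : ℤ | Even n} := by
    ext n
    simp only [Set.mem_range, Set.mem_setOf_eq, Int.even_iff]
    constructor
    · rintro ⟨k, rfl⟩; omega
    · intro h; exact ⟨n / 2, by omega⟩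
  have e2 : Set.range (fun k : ℤ ↦ 2*k-1) = {n : ℤ | Odd n} := by
    ext n
    simp only [Set.mem_range, Set.mem_setOf_eq, Int.odd_iff]
    constructor
    · rintro ⟨k, rfl⟩; omega
    · intro h; exact ⟨(n + 1) / 2, by omega⟩
  rw [e1, e2]
  exact Int.isCompl_even_odd

theorem stmt8 (τ z : ℂ) (hτ : 0 < τ.im) :
    jacobiThetaKM (1/2) 1 (2*τ) (2*z) - jacobiThetaKM (-(1/2)) 1 (2*τ) (2*z) =
      -Complex.I * theta11 τ z := by
  set g : ℤ → ℂ := fun n ↦ (-1:ℂ)^n * Complex.exp (2*(π:ℂ)*Complex.I*((n:ℂ)+1/2)*z) *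
    Complex.exp (2*(π:ℂ)*Complex.I*τ*((1/2)*((n:ℂ)+1/2)^2)) with hg_def
  -- summability of g
  have hg : ∀ n : ℤ, g n = Complex.exp ((π:ℂ)*Complex.I*z + (π:ℂ)*Complex.I*τ/4) *
      jacobiTheta₂_term n (z + τ/2 + 1/2) τ := by
    intro n
    rw [hg_def]
    simp only [jacobiTheta₂_term]
    rw [show ((-1:ℂ))^n = Complex.exp ((π:ℂ)*Complex.I*(n:ℂ)) by
      rw [show (π:ℂ)*Complex.I*(n:ℂ) = (n:ℤ)*((π:ℂ)*Complex.I) by ring,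
        Complex.exp_int_mul, Complex.exp_pi_mul_I]]
    rw [← Complex.exp_add, ← Complex.exp_add, ← Complex.exp_add]
    congr 1
    ring_nf
  have hsum : Summable g := by
    rw [funext hg]
    exact ((summable_jacobiTheta₂_term_iff _ τ).2 hτ).mul_left _
  have he : HasSum (fun j : ℤ ↦ g (2*j)) (∑' j : ℤ, g (2*j)) :=
    (hsum.comp_injective (fun x y h ↦ by dsimp only at h; omega : Function.Injective (fun k : ℤ ↦ 2*k))).hasSum
  have ho : HasSum (fun j : ℤ ↦ g (2*j-1)) (∑' j : ℤ, g (2*j-1)) :=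
    (hsum.comp_injective (fun x y h ↦ by dsimp only at h; omega : Function.Injective (fun k : ℤ ↦ 2*k-1))).hasSum
  have hsplit : (∑' j : ℤ, g (2*j)) + (∑' j : ℤ, g (2*j-1)) = ∑' n : ℤ, g n :=
    (hasSum_int_even_add_odd' he ho).tsum_eq.symm
  have hA : jacobiThetaKM (1/2) 1 (2*τ) (2*z) = ∑' j : ℤ, g (2*j) := by
    unfold jacobiThetaKM
    refine tsum_congr fun j ↦ ?_
    rw [hg_def]
    simp only
    rw [show ((-1:ℂ))^(2*j) = 1 by rw [zpow_mul]; norm_num, one_mul]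
    congr 1 <;> · congr 1; push_cast; ring
  have hB : jacobiThetaKM (-(1/2)) 1 (2*τ) (2*z) = -∑' j : ℤ, g (2*j-1) := by
    unfold jacobiThetaKM
    rw [← tsum_neg]
    refine tsum_congr fun j ↦ ?_
    rw [hg_def]
    simp only
    rw [show ((-1:ℂ))^(2*j-1) = -1 by
      rw [zpow_sub₀ (by norm_num : (-1:ℂ) ≠ 0), zpow_mul]; norm_num]
    rw [neg_mul, neg_mul, neg_neg]
    congr 1 <;> · congr 1; push_cast; ring
  rw [hA, hB, theta11, ← hg_def, sub_neg_eq_add, hsplit, ← mul_assoc, neg_mul,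
    Complex.I_mul_I, neg_neg, one_mul]

end
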